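/- Let T_{α,β} be the balanced spider with α ≥ 3 legs each of order β ≥ 1. Then th₊(T_{α,β}) = 1 + α·ŝ + t, where ŝ = ⌊√((2β + α + 1)/(4α))⌋ and t = ⌈(β − ŝ)/(2ŝ + 1)⌉ = ⌈(β + 1/2)/(2ŝ + 1) − 1/2⌉. -/

import Mathlib

open SimpleGraph

/-- `v` PSD-forces `w` given blue set `B`: `v` is blue, adjacent to the white vertex `w`,
and `w` is the only white neighbor of `v` in the component of `G - B` containing `w`. -/
def psdForces {V : Type*} (G : SimpleGraph V) (B : Set V) (v w : V) : Prop :=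
  v ∈ B ∧ G.Adj v w ∧ ∃ hw : w ∉ B,
    ∀ (u : V) (hu : u ∉ B), G.Adj v u →
      (G.induce {x | x ∉ B}).Reachable ⟨u, hu⟩ ⟨w, hw⟩ → u = w

/-- One time-step of PSD forcing: all forceable white vertices become blue simultaneously. -/
def psdStep {V : Type*} (G : SimpleGraph V) (B : Set V) : Set V :=
  B ∪ {w | ∃ v, psdForces G B v w}

/-- `B` is a PSD-forcing set of `G` if iterating the PSD color change rule colors all of `V`. -/
def IsPSDForcing {V : Type*} (G : SimpleGraph V) (B : Set V) : Prop :=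
  ∃ t, (psdStep G)^[t] B = Set.univ

/-- The PSD-propagation time of `B` in `G`. -/
noncomputable def psdPt {V : Type*} (G : SimpleGraph V) (B : Set V) : ℕ :=
  sInf {t | (psdStep G)^[t] B = Set.univ}

/-- The PSD-throttling number of `G`. -/
noncomputable def psdTh {V : Type*} (G : SimpleGraph V) : ℕ :=
  sInf {k | ∃ B : Finset V, IsPSDForcing G ↑B ∧ k = B.card + psdPt G ↑B}

/-- The weighted PSD-throttling number of `(G, w)`. -/
noncomputable def psdThW {V : Type*} (G : SimpleGraph V) (w : V → ℕ) : ℕ :=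
  sInf {k | ∃ B : Finset V, IsPSDForcing G ↑B ∧ k = (∑ x ∈ B, w x) + psdPt G ↑B}

/-- The spider `S(l₀, …, l_{k-1})`: a center vertex `none` adjacent to the first vertex
of each of `k` disjoint paths, the `i`-th of order `l i`. -/
def spider (k : ℕ) (l : Fin k → ℕ) : SimpleGraph (Option ((i : Fin k) × Fin (l i))) :=
  SimpleGraph.fromRel (fun x y =>
    (∃ (i : Fin k) (j : Fin (l i)), (j : ℕ) = 0 ∧ x = none ∧ y = some ⟨i, j⟩) ∨
    (∃ (i : Fin k) (j j' : Fin (l i)), (j' : ℕ) = (j : ℕ) + 1 ∧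
      x = some ⟨i, j⟩ ∧ y = some ⟨i, j'⟩))

/-- The balanced spider `T_{α,β}` with `α` legs each of order `β`. -/
abbrev balancedSpider (α β : ℕ) : SimpleGraph (Option ((_ : Fin α) × Fin β)) :=
  spider α (fun _ => β)

/-!
A blue vertex of a tree separates its white neighbours, so on the spider PSD forcing just adds
the neighbourhood of the blue set: after `u` steps the blue vertices are those within distance
`u` of `B`, and throttling becomes a covering problem. With the center blue and `x` blue
vertices on a leg of order `β`, the leg is covered in time `u` iff `β ≤ (2x+1)u + x`. The
bounds `4αŝ² ≤ 2β+α+1 < 4α(ŝ+1)²` that define `ŝ` say exactly that `ŝ` minimises the relaxed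
cost `α x + (β - x)/(2x+1)` over `ℕ`, which gives both bounds when the center is blue. If the
center is white, the blue vertex nearest to it has to cover it, so its own leg, carrying `r`
blue vertices, needs `β + 1 ≤ r(2u+1)`; comparing this with the covering condition for
`x = r`, `x = r - 1` or `x` the load of the least loaded leg recovers the `1` paid for the center.
-/

lemma SimpleGraph.Reachable.of_forall_adj_imp {V : Type*} {G : SimpleGraph V} (P : V → Prop)
    (hP : ∀ x y, G.Adj x y → P x → P y) {a b : V} (h : G.Reachable a b) (ha : P a) : P b := by
  obtain ⟨p⟩ := h
  induction p with
  | nil => exact ha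
  | cons hadj _ ih => exact ih (hP _ _ hadj ha)

section PSD

variable {V : Type*} {G : SimpleGraph V}

lemma psdStep_eq_of_not_reachable {B : Set V}
    (h : ∀ v ∈ B, ∀ u w (hu : u ∉ B) (hw : w ∉ B), G.Adj v u → G.Adj v w → u ≠ w →
      ¬ (G.induce {x | x ∉ B}).Reachable ⟨u, hu⟩ ⟨w, hw⟩) :
    psdStep G B = B ∪ {w | ∃ v ∈ B, G.Adj v w} := by
  ext w
  simp only [psdStep, psdForces, Set.mem_union, Set.mem_ofPred_eq]
  constructor
  · rintro (hw | ⟨v, hv, hvw, -⟩)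
    exacts [Or.inl hw, Or.inr ⟨v, hv, hvw⟩]
  · rintro (hw | ⟨v, hv, hvw⟩)
    · exact Or.inl hw
    by_cases hwB : w ∈ B
    · exact Or.inl hwB
    exact Or.inr ⟨v, hv, hvw, hwB, fun u hu hvu hr =>
      by_contra fun hne => h v hv u w hu hwB hvu hvw hne hr⟩

lemma psdPt_le {B : Set V} {t : ℕ} (h : (psdStep G)^[t] B = Set.univ) : psdPt G B ≤ t :=
  Nat.sInf_le h

lemma iterate_psdPt {B : Set V} (h : IsPSDForcing G B) : (psdStep G)^[psdPt G B] B = Set.univ :=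
  Nat.sInf_mem h

lemma psdTh_le {B : Finset V} (h : IsPSDForcing G B) : psdTh G ≤ B.card + psdPt G B :=
  Nat.sInf_le ⟨B, h, rfl⟩

lemma le_psdTh {n : ℕ} (hne : ∃ B : Finset V, IsPSDForcing G B)
    (h : ∀ B : Finset V, IsPSDForcing G B → n ≤ B.card + psdPt G B) : n ≤ psdTh G := by
  obtain ⟨B, hB⟩ := hne
  exact le_csInf ⟨_, B, hB, rfl⟩ fun _ ⟨B, hB, hk⟩ => hk ▸ h B hB

end PSD

lemma le_add_sum_of_covers {ι : Type*} (S : Finset ι) (e : ι → ℕ) {n m t : ℕ}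
    (h : ∀ d ∈ Finset.Icc 1 n, d ≤ m ∨ ∃ b ∈ S, Nat.dist (e b) d ≤ t) :
    n ≤ m + ∑ b ∈ S, min (2 * t + 1) (e b + t) := by
  classical
  have hsub : Finset.Icc 1 n ⊆
      Finset.Icc 1 m ∪ S.biUnion fun b => Finset.Icc (max 1 (e b - t)) (e b + t) := by
    intro d hd
    rcases h d hd with hdm | ⟨b, hb, hdist⟩
    · exact Finset.mem_union_left _ (by simp at hd ⊢; omega)
    · refine Finset.mem_union_right _ (Finset.mem_biUnion.2 ⟨b, hb, ?_⟩)
      simp only [Nat.dist, Finset.mem_Icc] at hd hdist ⊢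
      omega
  calc n = (Finset.Icc 1 n).card := by simp
    _ ≤ _ := Finset.card_le_card hsub
    _ ≤ m + ∑ b ∈ S, (Finset.Icc (max 1 (e b - t)) (e b + t)).card := by
      refine (Finset.card_union_le _ _).trans (add_le_add (by simp) Finset.card_biUnion_le)
    _ ≤ _ := by
      gcongr with b
      simp only [Nat.card_Icc]
      omega

lemma exists_mul_sq_le_lt (a : ℕ) {b : ℕ} (hb : 0 < b) :
    ∃ s : ℕ, b * s ^ 2 ≤ a ∧ a < b * (s + 1) ^ 2 :=
  ⟨Nat.sqrt (a / b), by simpa [mul_comm] using (Nat.le_div_iff_mul_le hb).1 (Nat.sqrt_le' _),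
    by simpa [mul_comm] using (Nat.div_lt_iff_lt_mul hb).1 (Nat.lt_succ_sqrt' _)⟩

lemma floor_sqrt_div_eq {a b s : ℕ} (hb : 0 < b) (h₁ : b * s ^ 2 ≤ a) (h₂ : a < b * (s + 1) ^ 2) :
    ⌊Real.sqrt ((a : ℝ) / b)⌋ = s := by
  have hb' : (0 : ℝ) < b := by exact_mod_cast hb
  rw [Int.floor_eq_iff, Int.cast_natCast, Real.le_sqrt (by positivity) (by positivity),
    Real.sqrt_lt' (by positivity), le_div_iff₀ hb', div_lt_iff₀ hb']
  exact ⟨by exact_mod_cast (mul_comm b _) ▸ h₁, by exact_mod_cast (mul_comm b _) ▸ h₂⟩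

lemma ceil_sub_div_eq {n s t : ℕ} (h₁ : n ≤ (2 * s + 1) * t + s) (h₂ : (2 * s + 1) * t ≤ n + s) :
    ⌈((n : ℝ) - s) / (2 * s + 1)⌉ = t := by
  have hpos : (0 : ℝ) < 2 * s + 1 := by positivity
  have h₁' : (n : ℝ) ≤ (2 * s + 1) * t + s := by exact_mod_cast h₁
  have h₂' : (2 * s + 1) * (t : ℝ) ≤ n + s := by exact_mod_cast h₂
  rw [Int.ceil_eq_iff, lt_div_iff₀ hpos, div_le_iff₀ hpos]
  push_cast
  constructor <;> nlinarith

namespace BalancedSpider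

variable {α β : ℕ}

abbrev Vert (α β : ℕ) := Option ((_ : Fin α) × Fin β)

def depth : Vert α β → ℕ
  | none => 0
  | some p => p.2 + 1

def leg : Vert α β → Option (Fin α)
  | none => none
  | some p => some p.1

@[simp] lemma depth_none : depth (none : Vert α β) = 0 := rfl
@[simp] lemma depth_some (i : Fin α) (j : Fin β) : depth (some ⟨i, j⟩ : Vert α β) = j + 1 := rfl
@[simp] lemma leg_none : leg (none : Vert α β) = none := rfl
@[simp] lemma leg_some (i : Fin α) (j : Fin β) : leg (some ⟨i, j⟩ : Vert α β) = some i := rfl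

lemma depth_eq_zero_iff : ∀ {x : Vert α β}, depth x = 0 ↔ x = none
  | none => by simp
  | some ⟨_, _⟩ => by simp

lemma ext_leg_depth {x y : Vert α β} (hl : leg x = leg y) (hd : depth x = depth y) : x = y := by
  match x, y with
  | none, none => rfl
  | none, some ⟨_, _⟩ | some ⟨_, _⟩, none => simp at hl
  | some ⟨i, j⟩, some ⟨i', j'⟩ =>
    simp only [leg_some, Option.some_inj, depth_some, add_left_inj] at hl hd
    subst hl
    rw [Fin.ext hd]

def IsChild (c p : Vert α β) : Prop := depth c = depth p + 1 ∧ (p = none ∨ leg p = leg c)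

lemma adj_iff {x y : Vert α β} :
    (balancedSpider α β).Adj x y ↔ IsChild y x ∨ IsChild x y := by
  have hrel : ∀ x y : Vert α β,
      ((∃ (i : Fin α) (j : Fin β), (j : ℕ) = 0 ∧ x = none ∧ y = some ⟨i, j⟩) ∨
        (∃ (i : Fin α) (j j' : Fin β), (j' : ℕ) = j + 1 ∧ x = some ⟨i, j⟩ ∧ y = some ⟨i, j'⟩)) ↔
      IsChild y x := by
    rintro (_ | ⟨i, j⟩) (_ | ⟨i', j'⟩) <;> simp [IsChild, eq_comm]
  rw [balancedSpider, spider, fromRel_adj, hrel, hrel]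
  refine ⟨And.right, fun h => ⟨?_, h⟩⟩
  rintro rfl
  rcases h with h | h <;> simp [IsChild] at h

lemma IsChild.unique {c p p' : Vert α β} (h : IsChild c p) (h' : IsChild c p') : p = p' := by
  obtain ⟨hd, hl⟩ := h
  obtain ⟨hd', hl'⟩ := h'
  have hdepth : depth p = depth p' := by omega
  rcases hl with rfl | hl
  · exact (depth_eq_zero_iff.1 (by simpa using hdepth.symm)).symm
  rcases hl' with rfl | hl'
  · exact depth_eq_zero_iff.1 (by simpa using hdepth)
  exact ext_leg_depth (hl.trans hl'.symm) hdepth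

lemma leg_eq_none_iff : ∀ {x : Vert α β}, leg x = none ↔ x = none
  | none => by simp
  | some ⟨_, _⟩ => by simp

lemma IsChild.ne_none {c p : Vert α β} (h : IsChild c p) : c ≠ none := by
  rintro rfl
  simp [IsChild] at h

lemma not_reachable_of_isChild {B : Set (Vert α β)} {v u w : Vert α β} (hv : v ∈ B) (hu : u ∉ B)
    (hw : w ∉ B) (hvu : IsChild u v) (hvw : (balancedSpider α β).Adj v w) (hne : u ≠ w) :
    ¬ ((balancedSpider α β).induce {x | x ∉ B}).Reachable ⟨u, hu⟩ ⟨w, hw⟩ := by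
  have hleg : leg u ≠ none := leg_eq_none_iff.not.2 hvu.ne_none
  -- the branch of the spider below `u`: it meets the rest of the spider only through `v`
  let Below : Vert α β → Prop := fun x => leg x = leg u ∧ depth u ≤ depth x
  have hclosed : ∀ x y, y ≠ v → (balancedSpider α β).Adj x y → Below x → Below y := by
    rintro x y hyv hxy ⟨hxl, hxd⟩
    rcases adj_iff.1 hxy with ⟨hd, rfl | hl⟩ | ⟨hd, hl⟩
    · exact absurd hxl.symm hleg
    · exact ⟨hl.symm.trans hxl, by omega⟩
    by_cases hyd : depth u ≤ depth y
    · rcases hl with rfl | hl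
      · have := hvu.1
        simp at hyd
        omega
      · exact ⟨hl.trans hxl, hyd⟩
    · have hux : u = x := ext_leg_depth hxl.symm (by omega)
      exact absurd (hvu.unique (hux ▸ ⟨hd, hl⟩)).symm hyv
  have hw' : ¬ Below w := by
    rintro ⟨hwl, hwd⟩
    rcases adj_iff.1 hvw with hwv | hwv
    · exact hne (ext_leg_depth hwl.symm (by have := hvu.1; have := hwv.1; omega))
    · have := hvu.1; have := hwv.1; omega
  intro hreach
  refine hw' (hreach.of_forall_adj_imp (fun x => Below x.1) ?_ ⟨rfl, le_rfl⟩)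
  rintro ⟨x, hx⟩ ⟨y, hy⟩ hxy
  exact hclosed x y (fun h => hy (h ▸ hv)) hxy

lemma not_reachable_of_adj {B : Set (Vert α β)} {v u w : Vert α β} (hv : v ∈ B) (hu : u ∉ B)
    (hw : w ∉ B) (hvu : (balancedSpider α β).Adj v u) (hvw : (balancedSpider α β).Adj v w)
    (hne : u ≠ w) :
    ¬ ((balancedSpider α β).induce {x | x ∉ B}).Reachable ⟨u, hu⟩ ⟨w, hw⟩ := by
  rcases adj_iff.1 hvu with hu' | hu'
  · exact not_reachable_of_isChild hv hu hw hu' hvw hne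
  rcases adj_iff.1 hvw with hw' | hw'
  · exact fun h => not_reachable_of_isChild hv hw hu hw' hvu hne.symm h.symm
  · exact absurd (hu'.unique hw') hne

lemma psdStep_balancedSpider :
    psdStep (balancedSpider α β) = fun B => B ∪ {w | ∃ v ∈ B, (balancedSpider α β).Adj v w} :=
  funext fun _ => psdStep_eq_of_not_reachable fun _ hv _ _ hu hw => not_reachable_of_adj hv hu hw

def vert (i : Fin α) (d : ℕ) : Vert α β :=
  if h : 0 < d ∧ d ≤ β then some ⟨i, ⟨d - 1, by omega⟩⟩ else none

@[simp] lemma vert_zero (i : Fin α) : vert i 0 = (none : Vert α β) := by simp [vert]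

lemma depth_vert (i : Fin α) {d : ℕ} (hd : d ≤ β) : depth (vert i d : Vert α β) = d := by
  unfold vert; split_ifs with h <;> simp <;> omega

lemma leg_vert (i : Fin α) {d : ℕ} (h0 : 0 < d) (hd : d ≤ β) :
    leg (vert i d : Vert α β) = some i := by
  simp [vert, h0, hd]

lemma vert_succ (i : Fin α) (j : Fin β) : vert i (j + 1) = some ⟨i, j⟩ := by
  simp [vert, Nat.succ_le_of_lt j.isLt]

lemma isChild_vert_succ (i : Fin α) {d : ℕ} (hd : d + 1 ≤ β) :
    IsChild (vert i (d + 1) : Vert α β) (vert i d) := by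
  refine ⟨by rw [depth_vert i hd, depth_vert i (by omega)], ?_⟩
  rcases Nat.eq_zero_or_pos d with rfl | h0
  · exact Or.inl (vert_zero i)
  · exact Or.inr (by rw [leg_vert i h0 (by omega), leg_vert i (by omega) hd])

def spiderDist (x y : Vert α β) : ℕ :=
  if leg x = leg y then Nat.dist (depth x) (depth y) else depth x + depth y

lemma spiderDist_eq_zero_iff {x y : Vert α β} : spiderDist x y = 0 ↔ x = y := by
  refine ⟨fun h => ?_, by rintro rfl; simp [spiderDist]⟩
  unfold spiderDist at h
  split_ifs at h with hl
  · exact ext_leg_depth hl (Nat.eq_of_dist_eq_zero h)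
  · rw [depth_eq_zero_iff.1 (by omega : depth x = 0), depth_eq_zero_iff.1 (by omega : depth y = 0)]

lemma spiderDist_none (b : Vert α β) : spiderDist b none = depth b := by
  unfold spiderDist
  split_ifs with h
  · simp [leg_eq_none_iff.1 h]
  · simp

lemma spiderDist_of_leg_ne {b x : Vert α β} (h : leg b ≠ leg x) :
    spiderDist b x = depth b + depth x := if_neg h

lemma spiderDist_of_leg_eq {b x : Vert α β} (h : leg b = leg x) :
    spiderDist b x = Nat.dist (depth b) (depth x) := if_pos h

lemma IsChild.spiderDist_le {c p : Vert α β} (h : IsChild c p) (b : Vert α β) :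
    spiderDist b c ≤ spiderDist b p + 1 ∧ spiderDist b p ≤ spiderDist b c + 1 := by
  obtain ⟨hd, rfl | hl⟩ := h
  · rw [spiderDist_none]
    simp only [spiderDist, Nat.dist, depth_none] at hd ⊢
    split_ifs <;> omega
  · simp only [spiderDist, Nat.dist, hl]
    split_ifs <;> omega

lemma spiderDist_le_of_adj {b x y : Vert α β} (h : (balancedSpider α β).Adj x y) :
    spiderDist b y ≤ spiderDist b x + 1 := by
  rcases adj_iff.1 h with h | h
  exacts [(h.spiderDist_le b).1, (h.spiderDist_le b).2]

lemma exists_isChild_spiderDist_le {b x : Vert α β} {n : ℕ} (hxb : x = none ∨ leg x = leg b)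
    (hlt : depth x < depth b) (h : spiderDist b x = n + 1) :
    ∃ y, IsChild y x ∧ spiderDist b y ≤ n := by
  have hb : b ≠ none := by rintro rfl; simp at hlt
  obtain ⟨⟨i, j⟩, rfl⟩ := Option.ne_none_iff_exists'.1 hb
  rw [depth_some] at hlt
  have hd : depth x + 1 ≤ β := hlt.trans_le j.isLt
  have hleg := leg_vert i (by omega : 0 < depth x + 1) hd
  have hchild : IsChild (vert i (depth x + 1)) x := by
    refine ⟨depth_vert i hd, ?_⟩
    rcases hxb with rfl | hl
    exacts [Or.inl rfl, Or.inr (hl.trans hleg.symm)]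
  have hdist : spiderDist (some ⟨i, j⟩) x = j + 1 - depth x := by
    rcases hxb with rfl | hl
    · rw [spiderDist_none]; rfl
    · rw [spiderDist_of_leg_eq hl.symm, Nat.dist, depth_some]; omega
  refine ⟨_, hchild, ?_⟩
  rw [spiderDist_of_leg_eq (b := some ⟨i, j⟩) hleg.symm, depth_vert i hd, Nat.dist, depth_some]
  omega

lemma spiderDist_vert_le {b : Vert α β} {i : Fin α} {j : Fin β} {n : ℕ}
    (hfar : leg b = some i → depth b ≤ j + 1) (h : spiderDist b (some ⟨i, j⟩) = n + 1) :
    spiderDist b (vert i j) ≤ n := by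
  have hdepth := depth_vert i j.isLt.le
  rcases Nat.eq_zero_or_pos (j : ℕ) with hj | hj
  · rw [hj, vert_zero, spiderDist_none]
    by_cases hl : leg b = some i
    · rw [spiderDist_of_leg_eq hl, depth_some, Nat.dist] at h
      have := hfar hl
      omega
    · rw [spiderDist_of_leg_ne hl, depth_some] at h
      omega
  have hleg := leg_vert i hj j.isLt.le
  by_cases hl : leg b = some i
  · rw [spiderDist_of_leg_eq hl, depth_some, Nat.dist] at h
    rw [spiderDist_of_leg_eq (hl.trans hleg.symm), hdepth, Nat.dist]
    have := hfar hl
    omega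
  · rw [spiderDist_of_leg_ne hl, depth_some] at h
    rw [spiderDist_of_leg_ne (hleg ▸ hl), hdepth]
    omega

lemma exists_adj_spiderDist_le {b x : Vert α β} {n : ℕ} (h : spiderDist b x = n + 1) :
    ∃ y, (balancedSpider α β).Adj y x ∧ spiderDist b y ≤ n := by
  by_cases htoward : (x = none ∨ leg x = leg b) ∧ depth x < depth b
  · obtain ⟨y, hy, hyb⟩ := exists_isChild_spiderDist_le htoward.1 htoward.2 h
    exact ⟨y, adj_iff.2 (Or.inr hy), hyb⟩
  have hx : x ≠ none := by
    rintro rfl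
    rw [spiderDist_none] at h
    exact htoward ⟨Or.inl rfl, by simp; omega⟩
  obtain ⟨⟨i, j⟩, rfl⟩ := Option.ne_none_iff_exists'.1 hx
  refine ⟨vert i j, adj_iff.2 (Or.inl (vert_succ i j ▸ isChild_vert_succ i j.isLt)),
    spiderDist_vert_le (fun hl => ?_) h⟩
  by_contra hlt
  exact htoward ⟨Or.inr hl.symm, by simp; omega⟩

lemma iterate_psdStep (B : Set (Vert α β)) (t : ℕ) :
    (psdStep (balancedSpider α β))^[t] B = {x | ∃ b ∈ B, spiderDist b x ≤ t} := by
  induction t with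
  | zero =>
    ext x
    simp [spiderDist_eq_zero_iff]
  | succ t ih =>
    rw [Function.iterate_succ_apply', ih, psdStep_balancedSpider]
    ext x
    simp only [Set.mem_union, Set.mem_ofPred_eq]
    constructor
    · rintro (⟨b, hb, hx⟩ | ⟨y, ⟨b, hb, hy⟩, hyx⟩)
      exacts [⟨b, hb, by omega⟩, ⟨b, hb, (spiderDist_le_of_adj hyx).trans (by omega)⟩]
    · rintro ⟨b, hb, hx⟩
      rcases Nat.lt_or_ge (spiderDist b x) (t + 1) with h | h
      · exact Or.inl ⟨b, hb, by omega⟩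
      · obtain ⟨y, hyx, hy⟩ := exists_adj_spiderDist_le (show spiderDist b x = t + 1 by omega)
        exact Or.inr ⟨y, ⟨b, hb, hy⟩, hyx⟩

def Covers (B : Set (Vert α β)) (t : ℕ) : Prop := ∀ x, ∃ b ∈ B, spiderDist b x ≤ t

lemma iterate_psdStep_eq_univ_iff {B : Set (Vert α β)} {t : ℕ} :
    (psdStep (balancedSpider α β))^[t] B = Set.univ ↔ Covers B t := by
  rw [iterate_psdStep, Set.eq_univ_iff_forall]
  rfl

/-- Besides the center, each leg carries `s` blue vertices at depths `2t+1, 2(2t+1), …`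
(cut off at the end of the leg); each covers the `2t+1` depths around it. -/
lemma exists_covers_card_le {s t : ℕ} (ht : β ≤ (2 * s + 1) * t + s) :
    ∃ B : Finset (Vert α β), B.card ≤ 1 + α * s ∧ Covers (B : Set (Vert α β)) t := by
  classical
  let f : Fin α × ℕ → Vert α β := fun p => vert p.1 (min β ((p.2 + 1) * (2 * t + 1)))
  refine ⟨insert none ((Finset.univ ×ˢ Finset.range s).image f), ?_, ?_⟩
  · calc _ ≤ ((Finset.univ ×ˢ Finset.range s).image f).card + 1 := Finset.card_insert_le _ _
      _ ≤ (Finset.univ ×ˢ Finset.range s).card + 1 := by gcongr; exact Finset.card_image_le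
      _ = 1 + α * s := by simp [add_comm]
  rintro (_ | ⟨i, j⟩)
  · exact ⟨none, by simp, by simp [spiderDist]⟩
  by_cases hjt : j + 1 ≤ t
  · exact ⟨none, by simp, by rw [spiderDist_of_leg_ne (by simp)]; simpa using hjt⟩
  have hjβ : j < β := j.isLt
  set k := (j - t) / (2 * t + 1)
  have hk : k < s := by
    rw [Nat.div_lt_iff_lt_mul (by omega)]
    have : (2 * s + 1) * t + s = s * (2 * t + 1) + t := by ring
    omega
  have hmem : f (i, k) ∈ insert none ((Finset.univ ×ˢ Finset.range s).image f) :=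
    Finset.mem_insert_of_mem (Finset.mem_image_of_mem f (by simp [hk]))
  refine ⟨f (i, k), hmem, ?_⟩
  have hpos : 0 < min β ((k + 1) * (2 * t + 1)) := lt_min (by omega) (by positivity)
  rw [spiderDist_of_leg_eq (leg_vert i hpos (min_le_left _ _)), depth_vert i (min_le_left _ _),
    depth_some, Nat.dist]
  have hdiv := Nat.div_add_mod (j - t) (2 * t + 1)
  have hmod := Nat.mod_lt (j - t) (show 2 * t + 1 > 0 by omega)
  have : (k + 1) * (2 * t + 1) = (2 * t + 1) * k + (2 * t + 1) := by ring
  rw [this]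
  generalize (2 * t + 1) * k = K at hdiv ⊢
  omega

lemma le_add_sum_of_covers_leg (i : Fin α) {B : Finset (Vert α β)} {t m : ℕ}
    (hB : Covers (B : Set (Vert α β)) t) (hm : ∀ b ∈ B, t ≤ m + depth b) :
    β ≤ m + ∑ b ∈ B.filter (leg · = some i), min (2 * t + 1) (depth b + t) := by
  refine le_add_sum_of_covers _ _ fun d hd => ?_
  rw [Finset.mem_Icc] at hd
  obtain ⟨b, hb, hbd⟩ := hB (vert i d)
  have hleg := leg_vert i (by omega) hd.2
  by_cases hl : leg b = some i
  · rw [spiderDist_of_leg_eq (hl.trans hleg.symm), depth_vert i hd.2] at hbd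
    exact Or.inr ⟨b, Finset.mem_filter.2 ⟨hb, hl⟩, hbd⟩
  · rw [spiderDist_of_leg_ne (hleg ▸ hl), depth_vert i hd.2] at hbd
    have := hm b hb
    exact Or.inl (by omega)

/-- With `x` blue vertices on every leg, a leg of order `β` is covered in time `u` iff
`β ≤ (2x+1)u + x`; this is `α x + u` with `u` relaxed to the real least such value. -/
noncomputable def relaxedCost (α β : ℕ) (x : ℕ) : ℝ := α * x + ((β : ℝ) - x) / (2 * x + 1)

lemma relaxedCost_le {s : ℕ} (hs₁ : 4 * α * s ^ 2 ≤ 2 * β + α + 1)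
    (hs₂ : 2 * β + α + 1 < 4 * α * (s + 1) ^ 2) (x : ℕ) :
    relaxedCost α β s ≤ relaxedCost α β x := by
  have hs₁' : 4 * (α : ℝ) * s ^ 2 ≤ 2 * β + α + 1 := by exact_mod_cast hs₁
  have hs₂' : 2 * (β : ℝ) + α + 1 < 4 * α * (s + 1) ^ 2 := by exact_mod_cast hs₂
  have hdiff : relaxedCost α β x - relaxedCost α β s =
      ((x : ℝ) - s) * (α * (2 * s + 1) * (2 * x + 1) - (2 * β + 1)) /
        ((2 * s + 1) * (2 * x + 1)) := by
    unfold relaxedCost; field_simp; ring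
  rw [← sub_nonneg, hdiff]
  apply div_nonneg _ (by positivity)
  rcases le_or_gt s x with h | h
  · have h' : (s : ℝ) ≤ x := by exact_mod_cast h
    rcases h.eq_or_lt with rfl | hlt
    · simp
    have hlt' : (s : ℝ) + 1 ≤ x := by exact_mod_cast hlt
    apply mul_nonneg (by linarith)
    nlinarith
  · have hlt' : (x : ℝ) + 1 ≤ s := by exact_mod_cast h
    apply mul_nonneg_of_nonpos_of_nonpos (by linarith)
    nlinarith

lemma mul_add_le_mul_add {s t : ℕ} (hs₁ : 4 * α * s ^ 2 ≤ 2 * β + α + 1)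
    (hs₂ : 2 * β + α + 1 < 4 * α * (s + 1) ^ 2) (ht : (2 * s + 1) * t ≤ β + s)
    {x u : ℕ} (hu : β ≤ (2 * x + 1) * u + x) : α * s + t ≤ α * x + u := by
  have hcost := relaxedCost_le hs₁ hs₂ x
  unfold relaxedCost at hcost
  have ht' : (2 * s + 1) * (t : ℝ) ≤ β + s := by exact_mod_cast ht
  have hu' : (β : ℝ) ≤ (2 * x + 1) * u + x := by exact_mod_cast hu
  have h₁ : (t : ℝ) - 1 < ((β : ℝ) - s) / (2 * s + 1) := by
    rw [lt_div_iff₀ (by positivity)]; nlinarith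
  have h₂ : ((β : ℝ) - x) / (2 * x + 1) ≤ u := by
    rw [div_le_iff₀ (by positivity)]; nlinarith
  have : ((α * s + t : ℕ) : ℝ) < α * x + u + 1 := by push_cast; linarith
  exact_mod_cast Nat.lt_succ_iff.mp (by exact_mod_cast this)

lemma one_add_mul_add_le_add_mul_add (hα : 2 ≤ α) {s t : ℕ}
    (hs₁ : 4 * α * s ^ 2 ≤ 2 * β + α + 1) (hs₂ : 2 * β + α + 1 < 4 * α * (s + 1) ^ 2)
    (ht : (2 * s + 1) * t ≤ β + s) {r q u : ℕ} (hr : β + 1 ≤ r * (2 * u + 1))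
    (hq : β ≤ q * (2 * u + 1) + u) : 1 + α * s + t ≤ r + (α - 1) * q + u := by
  -- compare with `x = q` at time `u`, with `x = r` at time `u - 1`, or with `x = r - 1` at time
  -- `u + α - 1`, according to whether `r > q`, `u ≥ 2r` or `u < 2r`
  obtain ⟨a, rfl⟩ : ∃ a, α = a + 1 := ⟨α - 1, by omega⟩
  simp only [Nat.add_sub_cancel] at *
  rcases le_or_gt (q + 1) r with hqr | hrq
  · have := mul_add_le_mul_add hs₁ hs₂ ht (x := q) (u := u) (by linarith)
    nlinarith
  have hr₀ : r ≠ 0 := by rintro rfl; simp at hr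
  obtain ⟨p, rfl⟩ : ∃ p, r = p + 1 := ⟨r - 1, by omega⟩
  have hrq' : a * (p + 1) ≤ a * q := Nat.mul_le_mul_left _ (by omega)
  rcases le_or_gt (2 * (p + 1)) u with hu | hu
  · obtain ⟨v, rfl⟩ : ∃ v, u = v + 1 := ⟨u - 1, by omega⟩
    have := mul_add_le_mul_add hs₁ hs₂ ht (x := p + 1) (u := v) (by nlinarith)
    nlinarith
  · have hpa : u ≤ (2 * p + 1) * a := by nlinarith
    have := mul_add_le_mul_add hs₁ hs₂ ht (x := p) (u := u + a) (by nlinarith)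
    nlinarith

def legCount (B : Finset (Vert α β)) (i : Fin α) : ℕ := (B.filter (leg · = some i)).card

lemma card_eq_card_filter_none_add_sum (B : Finset (Vert α β)) :
    B.card = (B.filter (leg · = none)).card + ∑ i, legCount B i := by
  rw [Finset.card_eq_sum_card_fiberwise (f := leg) (t := Finset.univ) fun _ _ => Finset.mem_univ _,
    Fintype.sum_option]
  rfl

lemma sum_min_le_card_mul (S : Finset (Vert α β)) (u : ℕ) :
    ∑ b ∈ S, min (2 * u + 1) (depth b + u) ≤ S.card * (2 * u + 1) := by
  simpa using Finset.sum_le_card_nsmul S _ (2 * u + 1) fun _ _ => min_le_left _ _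

lemma le_legCount_mul_add (i : Fin α) {B : Finset (Vert α β)} {u m : ℕ}
    (hB : Covers (B : Set (Vert α β)) u) (hm : ∀ b ∈ B, u ≤ m + depth b) :
    β ≤ legCount B i * (2 * u + 1) + m := by
  have := le_add_sum_of_covers_leg i hB hm
  have := sum_min_le_card_mul (B.filter (leg · = some i)) u
  rw [legCount]
  omega

lemma lt_legCount_mul {B : Finset (Vert α β)} {u m : ℕ} {i : Fin α} {j : Fin β}
    (hB : Covers (B : Set (Vert α β)) u) (hm : ∀ b ∈ B, u ≤ m + depth b)
    (hb : some ⟨i, j⟩ ∈ B) (hmu : m + (j + 1) ≤ u) :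
    β < legCount B i * (2 * u + 1) := by
  have hmem : some ⟨i, j⟩ ∈ B.filter (leg · = some i) := by simp [hb]
  have h₁ := le_add_sum_of_covers_leg i hB hm
  rw [← Finset.add_sum_erase _ _ hmem] at h₁
  have h₂ := sum_min_le_card_mul ((B.filter (leg · = some i)).erase (some ⟨i, j⟩)) u
  rw [Finset.card_erase_of_mem hmem] at h₂
  have h₃ : min (2 * u + 1) (depth (some ⟨i, j⟩ : Vert α β) + u) ≤ j + 1 + u :=
    min_le_right _ _
  obtain ⟨p, hp⟩ : ∃ p, (B.filter (leg · = some i)).card = p + 1 :=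
    ⟨_, (Nat.succ_pred_eq_of_pos (Finset.card_pos.2 ⟨_, hmem⟩)).symm⟩
  rw [hp, Nat.add_sub_cancel] at h₂
  rw [legCount, hp]
  nlinarith

lemma exists_min_legCount (hα : 0 < α) (B : Finset (Vert α β)) :
    ∃ i, α * legCount B i ≤ ∑ i, legCount B i := by
  obtain ⟨i₀, -, hmin⟩ :=
    Finset.exists_min_image Finset.univ (legCount B) ⟨⟨0, hα⟩, Finset.mem_univ _⟩
  exact ⟨i₀, by
    simpa using Finset.card_nsmul_le_sum Finset.univ _ _ fun i _ => hmin i (Finset.mem_univ _)⟩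

lemma one_add_mul_add_le_card_add_of_none_mem (hα : 0 < α) {s t : ℕ}
    (hs₁ : 4 * α * s ^ 2 ≤ 2 * β + α + 1) (hs₂ : 2 * β + α + 1 < 4 * α * (s + 1) ^ 2)
    (ht : (2 * s + 1) * t ≤ β + s) {B : Finset (Vert α β)} {u : ℕ}
    (hB : Covers (B : Set (Vert α β)) u) (hc : none ∈ B) : 1 + α * s + t ≤ B.card + u := by
  obtain ⟨i₀, hsum⟩ := exists_min_legCount hα B
  have hleg := le_legCount_mul_add i₀ hB (m := u) fun _ _ => le_self_add
  have hcenter : 1 ≤ (B.filter (leg · = none)).card := Finset.card_pos.2 ⟨none, by simp [hc]⟩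
  have := mul_add_le_mul_add hs₁ hs₂ ht (x := legCount B i₀) (u := u) (by linarith)
  have := card_eq_card_filter_none_add_sum B
  omega

lemma one_add_mul_add_le_card_add_of_none_not_mem (hα : 2 ≤ α) {s t : ℕ}
    (hs₁ : 4 * α * s ^ 2 ≤ 2 * β + α + 1) (hs₂ : 2 * β + α + 1 < 4 * α * (s + 1) ^ 2)
    (ht : (2 * s + 1) * t ≤ β + s) {B : Finset (Vert α β)} {u : ℕ}
    (hB : Covers (B : Set (Vert α β)) u) (hc : none ∉ B) : 1 + α * s + t ≤ B.card + u := by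
  classical
  obtain ⟨b₀, hb₀, hmin⟩ := Finset.exists_min_image B depth
    (by obtain ⟨b, hb, -⟩ := hB none; exact ⟨b, hb⟩)
  obtain ⟨⟨i₀, j₀⟩, rfl⟩ := Option.ne_none_iff_exists'.1 fun h => hc (h ▸ hb₀)
  have hdu : j₀ + 1 ≤ u := by
    obtain ⟨b, hb, hbu⟩ := hB none
    rw [spiderDist_none] at hbu
    exact (hmin b hb).trans hbu
  -- vertices of a leg that are covered from outside the leg lie at depth at most `u - (j₀ + 1)`
  have hm : ∀ b ∈ B, u ≤ u - (j₀ + 1) + depth b := fun b hb => by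
    have := hmin b hb
    simp only [depth_some] at this
    omega
  have hleg₀ := lt_legCount_mul hB hm hb₀ (by omega)
  obtain ⟨i₁, -, hmin₁⟩ := Finset.exists_min_image (Finset.univ.erase i₀) (legCount B)
    (Finset.card_pos.1 (by simp; omega))
  have hsum : legCount B i₀ + (α - 1) * legCount B i₁ ≤ ∑ i, legCount B i := by
    rw [← Finset.add_sum_erase _ _ (Finset.mem_univ i₀)]
    simpa [Finset.card_erase_of_mem] using Finset.card_nsmul_le_sum _ _ _ hmin₁
  have hleg₁ := le_legCount_mul_add i₁ hB hm
  have := one_add_mul_add_le_add_mul_add hα hs₁ hs₂ ht hleg₀ (q := legCount B i₁) (by omega)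
  have := card_eq_card_filter_none_add_sum B
  omega

lemma one_add_mul_add_le_card_add (hα : 2 ≤ α) {s t : ℕ}
    (hs₁ : 4 * α * s ^ 2 ≤ 2 * β + α + 1) (hs₂ : 2 * β + α + 1 < 4 * α * (s + 1) ^ 2)
    (ht : (2 * s + 1) * t ≤ β + s) {B : Finset (Vert α β)} {u : ℕ}
    (hB : Covers (B : Set (Vert α β)) u) : 1 + α * s + t ≤ B.card + u := by
  by_cases hc : none ∈ B
  exacts [one_add_mul_add_le_card_add_of_none_mem (by omega) hs₁ hs₂ ht hB hc,
    one_add_mul_add_le_card_add_of_none_not_mem hα hs₁ hs₂ ht hB hc]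

theorem psdTh_balancedSpider (hα : 2 ≤ α) {s t : ℕ}
    (hs₁ : 4 * α * s ^ 2 ≤ 2 * β + α + 1) (hs₂ : 2 * β + α + 1 < 4 * α * (s + 1) ^ 2)
    (ht₁ : β ≤ (2 * s + 1) * t + s) (ht₂ : (2 * s + 1) * t ≤ β + s) :
    psdTh (balancedSpider α β) = 1 + α * s + t := by
  obtain ⟨B, hcard, hB⟩ := exists_covers_card_le (α := α) ht₁
  have hforce : IsPSDForcing (balancedSpider α β) B := ⟨t, iterate_psdStep_eq_univ_iff.2 hB⟩
  refine le_antisymm ((psdTh_le hforce).trans ?_) (le_psdTh ⟨B, hforce⟩ fun B' hB' => ?_)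
  · have := psdPt_le (iterate_psdStep_eq_univ_iff.2 hB)
    omega
  · exact one_add_mul_add_le_card_add hα hs₁ hs₂ ht₂
      (iterate_psdStep_eq_univ_iff.1 (iterate_psdPt hB'))

end BalancedSpider

theorem stmt8 (α β : ℕ) (hα : 3 ≤ α) :
    ∃ s t : ℤ,
      s = ⌊Real.sqrt ((2 * (β : ℝ) + (α : ℝ) + 1) / (4 * (α : ℝ)))⌋ ∧
      t = ⌈((β : ℝ) - (s : ℝ)) / (2 * (s : ℝ) + 1)⌉ ∧
      t = ⌈((β : ℝ) + 1 / 2) / (2 * (s : ℝ) + 1) - 1 / 2⌉ ∧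
      (psdTh (balancedSpider α β) : ℤ) = 1 + (α : ℤ) * s + t := by
  obtain ⟨s, hs₁, hs₂⟩ := exists_mul_sq_le_lt (2 * β + α + 1) (by omega : 0 < 4 * α)
  have hdiv := Nat.lt_mul_div_succ (β + s) (show 0 < 2 * s + 1 by omega)
  have ht₂ := Nat.mul_div_le (β + s) (2 * s + 1)
  set t := (β + s) / (2 * s + 1)
  have ht₁ : β ≤ (2 * s + 1) * t + s := by
    rw [mul_add, mul_one] at hdiv
    omega
  have hceil := ceil_sub_div_eq ht₁ ht₂
  refine ⟨s, t, ?_, hceil.symm, ?_, ?_⟩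
  · have := floor_sqrt_div_eq (by omega) hs₁ hs₂
    push_cast at this
    exact this.symm
  · rw [← hceil, Int.cast_natCast]
    congr 1
    field_simp
    ring
  · rw [BalancedSpider.psdTh_balancedSpider (by omega) hs₁ hs₂ ht₁ ht₂]
    push_cast
    ring
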